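/- arXiv:2010.12487 — 3 statements merged into one kernel-verified Lean document; each statement's English description precedes it below -/
import Mathlib

section
/- Let d ≥ 2 and ν > 0, and write α_0, α_1, α_2 for α_0(d,ν), α_1(d,ν), α_2(d,ν). Then α_1 − α_2 ≥ exp(−1/(2ν²))/6 > 0, and c_d = (d−1)α_0α_2 − dα_1² + α_0α_1 ≥ exp(−2/ν²)/40 > 0. In particular Σ (the matrix with Σ_{0,0} = α_0, Σ_{0,j} = Σ_{j,0} = Σ_{j,j} = α_1, Σ_{j,k} = α_2 for 1 ≤ j ≠ k ≤ d) is invertible. -/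
noncomputable section

/-- The LIME weight function ψ_ν(t) = exp(−(1−√(1−t))²/(2ν²)). -/
def psi (ν t : ℝ) : ℝ := Real.exp (-(1 - Real.sqrt (1 - t)) ^ 2 / (2 * ν ^ 2))

/-- The coefficient α_p(d,ν). -/
def alpha (d : ℕ) (ν : ℝ) (p : ℕ) : ℝ :=
  (1 / (d : ℝ)) * ∑ s ∈ Finset.Icc 1 d,
    (∏ k ∈ Finset.range p, (((d : ℝ) - (s : ℝ) - (k : ℝ)) / ((d : ℝ) - (k : ℝ)))) *
      psi ν ((s : ℝ) / (d : ℝ))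

/-- The normalization constant c_d = (d−1)α₀α₂ − dα₁² + α₀α₁. -/
def cConst (d : ℕ) (ν : ℝ) : ℝ :=
  ((d : ℝ) - 1) * alpha d ν 0 * alpha d ν 2 - (d : ℝ) * (alpha d ν 1) ^ 2
    + alpha d ν 0 * alpha d ν 1

/-- σ₀ = (d−1)α₂ + α₁. -/
def sigma0 (d : ℕ) (ν : ℝ) : ℝ := ((d : ℝ) - 1) * alpha d ν 2 + alpha d ν 1

/-- σ₁ = −α₁. -/
def sigma1 (d : ℕ) (ν : ℝ) : ℝ := -(alpha d ν 1)

/-- σ₂ = ((d−2)α₀α₂ − (d−1)α₁² + α₀α₁)/(α₁−α₂). -/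
def sigma2 (d : ℕ) (ν : ℝ) : ℝ :=
  (((d : ℝ) - 2) * alpha d ν 0 * alpha d ν 2 - ((d : ℝ) - 1) * (alpha d ν 1) ^ 2
      + alpha d ν 0 * alpha d ν 1) / (alpha d ν 1 - alpha d ν 2)

/-- σ₃ = (α₁² − α₀α₂)/(α₁−α₂). -/
def sigma3 (d : ℕ) (ν : ℝ) : ℝ :=
  ((alpha d ν 1) ^ 2 - alpha d ν 0 * alpha d ν 2) / (alpha d ν 1 - alpha d ν 2)

/-- The matrix Σ ∈ ℝ^{(d+1)×(d+1)}: Σ₀₀ = α₀; Σ₀ⱼ = Σⱼ₀ = Σⱼⱼ = α₁ for 1 ≤ j ≤ d;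
Σⱼₖ = α₂ for 1 ≤ j ≠ k ≤ d. -/
def SigmaMat (d : ℕ) (ν : ℝ) : Matrix (Fin (d + 1)) (Fin (d + 1)) ℝ :=
  Matrix.of fun i j =>
    if i = 0 ∧ j = 0 then alpha d ν 0
    else if i = 0 ∨ j = 0 ∨ i = j then alpha d ν 1
    else alpha d ν 2

/- α₀, α₁, α₂ are ψ-averages of 1, (d−s)/d and (d−s)(d−s−1)/(d(d−1)), so d³ c_d is the
ψ-weighted variance (Σψ)(Σ(d−s)²ψ) − (Σ(d−s)ψ)², which Lagrange's identity writes as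
½ Σ_{s,t} ψ_s ψ_t (s−t)², and α₁ − α₂ is the ψ-average of s(d−s)/(d(d−1)). As ψ ≥ exp(−1/(2ν²)),
both are bounded below by their values for constant ψ, which have closed forms. A kernel vector
of Σ is constant on the coordinates 1, …, d, and on such vectors Σ acts as a 2 × 2 matrix of
determinant c_d; hence α₁ ≠ α₂ and c_d ≠ 0 make Σ invertible. -/

open Finset

theorem sum_sum_mul_sub_sq {ι R : Type*} [CommRing R] (s : Finset ι) (f u : ι → R) :
    ∑ i ∈ s, ∑ j ∈ s, f i * f j * (u i - u j) ^ 2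
      = 2 * ((∑ i ∈ s, f i) * (∑ i ∈ s, u i ^ 2 * f i) - (∑ i ∈ s, u i * f i) ^ 2) := by
  have expand : ∀ i j, f i * f j * (u i - u j) ^ 2
      = f j * (u i ^ 2 * f i) - 2 * (u i * f i) * (u j * f j) + f i * (u j ^ 2 * f j) :=
    fun i j => by ring
  simp only [expand, sum_add_distrib, sum_sub_distrib, ← mul_sum, ← sum_mul]
  ring

theorem sum_Icc_id_cast (d : ℕ) : ∑ s ∈ Icc 1 d, (s : ℝ) = d * (d + 1) / 2 := by
  induction d with
  | zero => simp
  | succ n ih => rw [sum_Icc_succ_top (Nat.le_add_left 1 n), ih]; push_cast; ring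

theorem sum_Icc_sq_cast (d : ℕ) : ∑ s ∈ Icc 1 d, (s : ℝ) ^ 2 = d * (d + 1) * (2 * d + 1) / 6 := by
  induction d with
  | zero => simp
  | succ n ih => rw [sum_Icc_succ_top (Nat.le_add_left 1 n), ih]; push_cast; ring

theorem sum_Icc_mul_sub (d : ℕ) : ∑ s ∈ Icc 1 d, (s : ℝ) * (d - s) = d * (d ^ 2 - 1) / 6 := by
  simp only [mul_sub, sum_sub_distrib, ← sq, mul_comm _ (d : ℝ), ← mul_sum, sum_Icc_id_cast,
    sum_Icc_sq_cast]
  ring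

theorem sum_sum_Icc_sub_sq (d : ℕ) :
    ∑ s ∈ Icc 1 d, ∑ t ∈ Icc 1 d, ((s : ℝ) - t) ^ 2 = d ^ 2 * (d ^ 2 - 1) / 6 := by
  have := sum_sum_mul_sub_sq (Icc 1 d) (fun _ => (1 : ℝ)) (fun s => (s : ℝ))
  simp only [one_mul, sum_const, Nat.card_Icc, add_tsub_cancel_right, nsmul_eq_mul, mul_one,
    sum_Icc_id_cast, sum_Icc_sq_cast] at this
  rw [this]
  ring

theorem exp_le_psi (ν : ℝ) {t : ℝ} (ht : 0 ≤ t) : Real.exp (-1 / (2 * ν ^ 2)) ≤ psi ν t := by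
  have hs0 : 0 ≤ Real.sqrt (1 - t) := Real.sqrt_nonneg _
  have hs1 : Real.sqrt (1 - t) ≤ 1 := Real.sqrt_le_one.mpr (by linarith)
  refine Real.exp_le_exp.mpr ?_
  rw [neg_div, neg_div, neg_le_neg_iff]
  gcongr
  nlinarith

theorem alpha_zero_eq (d : ℕ) (ν : ℝ) :
    alpha d ν 0 = (∑ s ∈ Icc 1 d, psi ν (s / d)) / d := by
  simp [alpha, div_eq_inv_mul]

theorem alpha_one_eq (d : ℕ) (ν : ℝ) :
    alpha d ν 1 = (∑ s ∈ Icc 1 d, (d - s) * psi ν (s / d)) / d ^ 2 := by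
  simp only [alpha, prod_range_one, Nat.cast_zero, sub_zero, div_eq_inv_mul, mul_sum]
  exact sum_congr rfl fun s _ => by ring

theorem alpha_two_eq (d : ℕ) (ν : ℝ) :
    alpha d ν 2 = (∑ s ∈ Icc 1 d, (d - s) * (d - s - 1) * psi ν (s / d)) / (d ^ 2 * (d - 1)) := by
  simp only [alpha, prod_range_succ, prod_range_zero, Nat.cast_zero, Nat.cast_one, sub_zero,
    div_eq_inv_mul, mul_sum, mul_inv]
  exact sum_congr rfl fun s _ => by ring

theorem alpha_one_sub_alpha_two {d : ℕ} (hd : 2 ≤ d) (ν : ℝ) :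
    alpha d ν 1 - alpha d ν 2
      = (∑ s ∈ Icc 1 d, s * (d - s) * psi ν (s / d)) / (d ^ 2 * (d - 1)) := by
  have hd1 : (d : ℝ) - 1 ≠ 0 := by
    have : (2 : ℝ) ≤ d := by exact_mod_cast hd
    linarith
  have weights : ∑ s ∈ Icc 1 d, s * (d - s) * psi ν (s / d)
      = (d - 1) * ∑ s ∈ Icc 1 d, (d - s) * psi ν (s / d)
        - ∑ s ∈ Icc 1 d, (d - s) * (d - s - 1) * psi ν (s / d) := by
    rw [mul_sum, ← sum_sub_distrib]
    exact sum_congr rfl fun s _ => by ring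
  rw [weights, alpha_one_eq, alpha_two_eq]
  field_simp

theorem cConst_eq_sum_sum {d : ℕ} (hd : 2 ≤ d) (ν : ℝ) :
    cConst d ν = (∑ s ∈ Icc 1 d, ∑ t ∈ Icc 1 d,
      psi ν (s / d) * psi ν (t / d) * ((s : ℝ) - t) ^ 2) / (2 * d ^ 3) := by
  have hd1 : (d : ℝ) - 1 ≠ 0 := by
    have : (2 : ℝ) ≤ d := by exact_mod_cast hd
    linarith
  have lagrange := sum_sum_mul_sub_sq (Icc 1 d) (fun s => psi ν (s / d)) (fun s => (d : ℝ) - s)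
  have shift : ∀ s t : ℕ, ((d : ℝ) - s - (d - t)) ^ 2 = ((s : ℝ) - t) ^ 2 := fun s t => by ring
  have moment : ∑ s ∈ Icc 1 d, ((d : ℝ) - s) ^ 2 * psi ν (s / d)
      = ∑ s ∈ Icc 1 d, (d - s) * (d - s - 1) * psi ν (s / d)
        + ∑ s ∈ Icc 1 d, (d - s) * psi ν (s / d) := by
    rw [← sum_add_distrib]
    exact sum_congr rfl fun s _ => by ring
  simp only [shift, moment] at lagrange
  rw [lagrange, cConst, alpha_zero_eq, alpha_one_eq, alpha_two_eq]
  field_simp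
  ring

theorem exp_div_six_le_alpha_one_sub_alpha_two {d : ℕ} (hd : 2 ≤ d) (ν : ℝ) :
    Real.exp (-1 / (2 * ν ^ 2)) / 6 ≤ alpha d ν 1 - alpha d ν 2 := by
  set E := Real.exp (-1 / (2 * ν ^ 2))
  have hE : 0 ≤ E := (Real.exp_pos _).le
  have hd2 : (2 : ℝ) ≤ d := by exact_mod_cast hd
  rw [alpha_one_sub_alpha_two hd]
  calc E / 6 ≤ E * ((d + 1) / (6 * d)) := by
        rw [div_eq_mul_one_div]
        refine mul_le_mul_of_nonneg_left ?_ hE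
        rw [div_le_div_iff₀ (by norm_num) (by positivity)]
        linarith
    _ = (∑ s ∈ Icc 1 d, s * (d - s) * E) / (d ^ 2 * (d - 1)) := by
        have : (d : ℝ) - 1 ≠ 0 := by linarith
        rw [← sum_mul, sum_Icc_mul_sub]
        field_simp
        ring
    _ ≤ (∑ s ∈ Icc 1 d, s * (d - s) * psi ν (s / d)) / (d ^ 2 * (d - 1)) := by
        refine div_le_div_of_nonneg_right (sum_le_sum fun s hs => ?_) (by nlinarith)
        have hsd : (s : ℝ) ≤ d := by exact_mod_cast (mem_Icc.mp hs).2
        exact mul_le_mul_of_nonneg_left (exp_le_psi ν (by positivity)) (by nlinarith)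

theorem exp_div_forty_le_cConst {d : ℕ} (hd : 2 ≤ d) (ν : ℝ) :
    Real.exp (-2 / ν ^ 2) / 40 ≤ cConst d ν := by
  set E := Real.exp (-1 / (2 * ν ^ 2))
  have hE : 0 ≤ E := (Real.exp_pos _).le
  have hd2 : (2 : ℝ) ≤ d := by exact_mod_cast hd
  have exp_le_sq : Real.exp (-2 / ν ^ 2) ≤ E * E := by
    rw [← Real.exp_add, Real.exp_le_exp]
    have : -1 / (2 * ν ^ 2) + -1 / (2 * ν ^ 2) = -1 / ν ^ 2 := by ring
    rw [this]
    exact div_le_div_of_nonneg_right (by norm_num) (sq_nonneg ν)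
  rw [cConst_eq_sum_sum hd]
  calc Real.exp (-2 / ν ^ 2) / 40 ≤ E * E * (1 / 40) := by rw [← div_eq_mul_one_div]; gcongr
    _ ≤ E * E * ((d ^ 2 - 1) / (12 * d)) := by
        refine mul_le_mul_of_nonneg_left ?_ (mul_nonneg hE hE)
        rw [div_le_div_iff₀ (by norm_num) (by positivity)]
        nlinarith
    _ = (∑ s ∈ Icc 1 d, ∑ t ∈ Icc 1 d, E * E * ((s : ℝ) - t) ^ 2) / (2 * d ^ 3) := by
        simp only [← mul_sum, sum_sum_Icc_sub_sq]
        field_simp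
        ring
    _ ≤ _ := by
        refine div_le_div_of_nonneg_right (sum_le_sum fun s _ => sum_le_sum fun t _ => ?_)
          (by positivity)
        refine mul_le_mul_of_nonneg_right ?_ (sq_nonneg _)
        exact mul_le_mul (exp_le_psi ν (by positivity)) (exp_le_psi ν (by positivity)) hE
          (Real.exp_pos _).le

def borderedEquicorrelation {K : Type*} [Zero K] (n : ℕ) (a b c : K) :
    Matrix (Fin (n + 1)) (Fin (n + 1)) K :=
  Matrix.of fun i j => if i = 0 ∧ j = 0 then a else if i = 0 ∨ j = 0 ∨ i = j then b else c

theorem isUnit_borderedEquicorrelation {K : Type*} [Field K] {n : ℕ} {a b c : K} (hbc : b ≠ c)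
    (hdet : (n - 1) * a * c - n * b ^ 2 + a * b ≠ 0) :
    IsUnit (borderedEquicorrelation n a b c) := by
  rw [Matrix.isUnit_iff_isUnit_det, isUnit_iff_ne_zero]
  intro h
  obtain ⟨v, hv, hMv⟩ := Matrix.exists_mulVec_eq_zero_iff.mpr h
  set S := ∑ j : Fin n, v j.succ
  have row_zero : a * v 0 + b * S = 0 := by
    have := congrFun hMv 0
    simp only [borderedEquicorrelation, Matrix.mulVec, dotProduct, Matrix.of_apply, true_and,
      true_or, ↓reduceIte, ite_mul, Fin.sum_univ_succ, Fin.succ_ne_zero, Pi.zero_apply] at this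
    rwa [← mul_sum] at this
  have row_succ : ∀ i : Fin n, (b - c) * v i.succ = -(b * v 0 + c * S) := by
    intro i
    have row := congrFun hMv i.succ
    simp only [borderedEquicorrelation, Matrix.mulVec, dotProduct, Matrix.of_apply,
      Fin.succ_ne_zero, false_and, ↓reduceIte, false_or, ite_mul, Fin.sum_univ_succ, or_false,
      Fin.succ_inj, Pi.zero_apply] at row
    have split : ∑ j : Fin n, (if i = j then b * v j.succ else c * v j.succ)
        = c * S + (b - c) * v i.succ :=
      calc _ = ∑ j : Fin n, (c * v j.succ + if i = j then (b - c) * v j.succ else 0) :=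
            sum_congr rfl fun j _ => by split_ifs <;> ring
        _ = _ := by rw [sum_add_distrib, ← mul_sum, sum_ite_eq, if_pos (mem_univ i)]
    linear_combination row - split
  have sum_rows : (b - c) * S = -(n * (b * v 0 + c * S)) :=
    calc (b - c) * S = ∑ i : Fin n, (b - c) * v i.succ := mul_sum _ _ _
      _ = ∑ _i : Fin n, -(b * v 0 + c * S) := sum_congr rfl fun i _ => row_succ i
      _ = _ := by rw [sum_const, card_univ, Fintype.card_fin, nsmul_eq_mul]; ring
  have hv0 : v 0 = 0 := by
    refine (mul_eq_zero.mp ?_).resolve_left hdet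
    linear_combination ((n : K) * c + b - c) * row_zero - b * sum_rows
  have hS0 : S = 0 := by
    refine (mul_eq_zero.mp ?_).resolve_left hdet
    linear_combination a * sum_rows - (n * b) * row_zero
  refine hv (funext fun i => Fin.cases hv0 (fun i => ?_) i)
  have := row_succ i
  rw [hv0, hS0] at this
  simpa [sub_ne_zero.mpr hbc] using this

theorem SigmaMat_eq_borderedEquicorrelation (d : ℕ) (ν : ℝ) :
    SigmaMat d ν = borderedEquicorrelation d (alpha d ν 0) (alpha d ν 1) (alpha d ν 2) :=
  rfl

theorem alpha_gap_and_cConst_pos_general (d : ℕ) (hd : 2 ≤ d) (ν : ℝ) :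
    (alpha d ν 1 - alpha d ν 2 ≥ Real.exp (-1 / (2 * ν ^ 2)) / 6)
      ∧ (0 : ℝ) < Real.exp (-1 / (2 * ν ^ 2)) / 6
      ∧ (cConst d ν ≥ Real.exp (-2 / ν ^ 2) / 40)
      ∧ (0 : ℝ) < Real.exp (-2 / ν ^ 2) / 40
      ∧ IsUnit (SigmaMat d ν) := by
  have gap := exp_div_six_le_alpha_one_sub_alpha_two hd ν
  have gap_bound_pos : (0 : ℝ) < Real.exp (-1 / (2 * ν ^ 2)) / 6 := by positivity
  have hc := exp_div_forty_le_cConst hd ν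
  have c_bound_pos : (0 : ℝ) < Real.exp (-2 / ν ^ 2) / 40 := by positivity
  refine ⟨gap, gap_bound_pos, hc, c_bound_pos, ?_⟩
  rw [SigmaMat_eq_borderedEquicorrelation]
  exact isUnit_borderedEquicorrelation (sub_ne_zero.mp (gap_bound_pos.trans_le gap).ne')
    (c_bound_pos.trans_le hc).ne'

/-- for d ≥ 2, α₁ − α₂ ≥ exp(−1/(2ν²))/6 > 0 and
c_d ≥ exp(−2/ν²)/40 > 0; in particular Σ is invertible. -/
theorem alpha_gap_and_cConst_pos (d : ℕ) (hd : 2 ≤ d) (ν : ℝ) (hν : 0 < ν) :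
    (alpha d ν 1 - alpha d ν 2 ≥ Real.exp (-1 / (2 * ν ^ 2)) / 6)
      ∧ (0 : ℝ) < Real.exp (-1 / (2 * ν ^ 2)) / 6
      ∧ (cConst d ν ≥ Real.exp (-2 / ν ^ 2) / 40)
      ∧ (0 : ℝ) < Real.exp (-2 / ν ^ 2) / 40
      ∧ IsUnit (SigmaMat d ν) :=
  alpha_gap_and_cConst_pos_general d hd ν

end
end

section
/- Let d ≥ 2 and ν ≥ 1.66. Then |σ_0| ≤ d/3, |σ_1| ≤ 1, |σ_2| ≤ (3d/2)·exp(1/(2ν²)), and |σ_3| ≤ (3/2)·exp(1/(2ν²)). -/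
/-!
Every combination of the α's that enters the σ's is a ψ-weighted average `(1/d) ∑ f(s) ψ(s/d)`
of a function `f` that is nonnegative for `1 ≤ s ≤ d`, and `e^{-1/(2ν²)} ≤ ψ ≤ 1` on `[0, 1]`.
Such an average therefore lies between `e^{-1/(2ν²)}` times and one times the plain average of
`f`, which for the quadratics at hand is explicit. This bounds `α₀`, `α₁`, `α₀ - α₁` and
`σ₀ = (d-1)α₂ + α₁ = avg_ψ((d-s)²/d)` from above, and `α₁ - α₂ = avg_ψ(s(d-s)/(d(d-1)))` from below
by `e^{-1/(2ν²)}(d+1)/(6d)`. Then `|α₁² - α₀α₂| ≤ α₁ max(α₁, α₀ - α₁) ≤ (d+1)/(4d)` bounds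
`σ₃ = (α₁² - α₀α₂)/(α₁ - α₂)`, and `σ₂ = α₀ - (d-1)σ₃`.
-/

noncomputable section

open Finset

lemma psi_le_one (ν t : ℝ) : psi ν t ≤ 1 := by
  rw [psi, Real.exp_le_one_iff, neg_div]
  exact neg_nonpos.mpr (by positivity)

lemma one_le_exp_mul_psi (ν : ℝ) {t : ℝ} (ht : 0 ≤ t) :
    1 ≤ Real.exp (1 / (2 * ν ^ 2)) * psi ν t := by
  have hs₀ : 0 ≤ Real.sqrt (1 - t) := Real.sqrt_nonneg _
  have hs₁ : Real.sqrt (1 - t) ≤ 1 := Real.sqrt_le_one.mpr (by linarith)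
  have hsq : (1 - Real.sqrt (1 - t)) ^ 2 ≤ 1 := by nlinarith
  rw [psi, ← Real.exp_add, neg_div, ← sub_eq_add_neg, ← sub_div]
  exact Real.one_le_exp (div_nonneg (by linarith) (by positivity))

lemma sum_Icc_quadratic (d : ℕ) (a b c : ℝ) :
    ∑ s ∈ Icc 1 d, (a + b * s + c * s ^ 2)
      = a * d + b * (d * (d + 1) / 2) + c * (d * (d + 1) * (2 * d + 1) / 6) := by
  induction d with
  | zero => simp
  | succ n ih =>
    rw [sum_Icc_succ_top (by omega), ih]
    push_cast
    ring

def gridAverage (d : ℕ) (f : ℕ → ℝ) : ℝ := (1 / d) * ∑ s ∈ Icc 1 d, f s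

lemma gridAverage_quadratic {d : ℕ} (hd : d ≠ 0) {f : ℕ → ℝ} {a b c : ℝ}
    (hf : ∀ s : ℕ, f s = a + b * s + c * s ^ 2) :
    gridAverage d f = a + b * (d + 1) / 2 + c * (d + 1) * (2 * d + 1) / 6 := by
  simp only [gridAverage, hf, sum_Icc_quadratic]
  field_simp

def psiAverage (d : ℕ) (ν : ℝ) : (ℕ → ℝ) →ₗ[ℝ] ℝ where
  toFun f := (1 / d) * ∑ s ∈ Icc 1 d, f s * psi ν (s / d)
  map_add' f g := by simp only [Pi.add_apply, add_mul, sum_add_distrib, mul_add]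
  map_smul' c f := by
    simp only [Pi.smul_apply, smul_eq_mul, RingHom.id_apply, mul_assoc, ← mul_sum]
    ring

lemma psiAverage_apply (d : ℕ) (ν : ℝ) (f : ℕ → ℝ) :
    psiAverage d ν f = (1 / d) * ∑ s ∈ Icc 1 d, f s * psi ν (s / d) := rfl

lemma psiAverage_mem_Icc {d : ℕ} (ν : ℝ) {f : ℕ → ℝ} (hf : ∀ s ∈ Icc 1 d, 0 ≤ f s) :
    psiAverage d ν f ∈ Set.Icc 0 (gridAverage d f) := by
  rw [psiAverage_apply, gridAverage]
  constructor
  · exact mul_nonneg (by positivity)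
      (sum_nonneg fun s hs => mul_nonneg (hf s hs) (Real.exp_pos _).le)
  · refine mul_le_mul_of_nonneg_left (sum_le_sum fun s hs => ?_) (by positivity)
    exact mul_le_of_le_one_right (hf s hs) (psi_le_one ν _)

lemma gridAverage_le_exp_mul_psiAverage {d : ℕ} (ν : ℝ) {f : ℕ → ℝ}
    (hf : ∀ s ∈ Icc 1 d, 0 ≤ f s) :
    gridAverage d f ≤ Real.exp (1 / (2 * ν ^ 2)) * psiAverage d ν f := by
  rw [psiAverage_apply, gridAverage, mul_left_comm (Real.exp _)]
  refine mul_le_mul_of_nonneg_left ?_ (by positivity)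
  rw [mul_sum]
  refine sum_le_sum fun s hs => ?_
  calc f s ≤ f s * (Real.exp (1 / (2 * ν ^ 2)) * psi ν (s / d)) :=
        le_mul_of_one_le_right (hf s hs) (one_le_exp_mul_psi ν (by positivity))
    _ = _ := by ring

/-- For `s, p ≤ d` this is `(d - s).choose p / d.choose p`. -/
def binomRatio (d p s : ℕ) : ℝ := ∏ k ∈ range p, (((d : ℝ) - s - k) / ((d : ℝ) - k))

lemma alpha_eq_psiAverage (d : ℕ) (ν : ℝ) (p : ℕ) :
    alpha d ν p = psiAverage d ν (binomRatio d p) := rfl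

lemma binomRatio_nonneg {d s : ℕ} (hs : s ≤ d) (p : ℕ) : 0 ≤ binomRatio d p s := by
  by_cases hp : p ≤ d - s
  · refine prod_nonneg fun k hk => div_nonneg ?_ ?_
    all_goals
      have : (k : ℝ) + s + 1 ≤ d := by
        exact_mod_cast (show k + s + 1 ≤ d by simp only [mem_range] at hk; omega)
      linarith
  · refine (prod_eq_zero (i := d - s) (mem_range.mpr (by omega)) ?_).ge
    rw [Nat.cast_sub hs]
    ring

lemma binomRatio_zero (d s : ℕ) : binomRatio d 0 s = 1 := by simp [binomRatio]

lemma binomRatio_one (d s : ℕ) : binomRatio d 1 s = (d - s) / d := by simp [binomRatio]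

lemma binomRatio_two (d s : ℕ) :
    binomRatio d 2 s = (d - s) * (d - s - 1) / (d * (d - 1)) := by
  simp [binomRatio, prod_range_succ]

lemma alpha_mem_Icc (d : ℕ) (ν : ℝ) (p : ℕ) :
    alpha d ν p ∈ Set.Icc 0 (gridAverage d (binomRatio d p)) := by
  rw [alpha_eq_psiAverage]
  exact psiAverage_mem_Icc ν fun _ hs => binomRatio_nonneg (mem_Icc.mp hs).2 p

lemma alpha_zero_le_one {d : ℕ} (hd : d ≠ 0) (ν : ℝ) : alpha d ν 0 ≤ 1 := by
  refine (alpha_mem_Icc d ν 0).2.trans_eq ?_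
  rw [gridAverage_quadratic hd (a := 1) (b := 0) (c := 0) fun s => by rw [binomRatio_zero]; ring]
  ring

lemma alpha_one_le {d : ℕ} (hd : d ≠ 0) (ν : ℝ) : alpha d ν 1 ≤ (d - 1) / (2 * d) := by
  refine (alpha_mem_Icc d ν 1).2.trans_eq ?_
  rw [gridAverage_quadratic hd (a := 1) (b := -1 / d) (c := 0) fun s => by
    rw [binomRatio_one]; field_simp; ring]
  field_simp
  ring

lemma alpha_zero_sub_alpha_one_mem_Icc {d : ℕ} (hd : d ≠ 0) (ν : ℝ) :
    alpha d ν 0 - alpha d ν 1 ∈ Set.Icc 0 (((d : ℝ) + 1) / (2 * d)) := by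
  have hdiff : binomRatio d 0 - binomRatio d 1 = fun s : ℕ => (s : ℝ) / d := by
    funext s
    simp only [Pi.sub_apply, binomRatio_zero, binomRatio_one]
    field_simp
    ring
  obtain ⟨h₀, h₁⟩ := psiAverage_mem_Icc (d := d) ν (f := fun s : ℕ => (s : ℝ) / d)
    fun _ _ => by positivity
  rw [gridAverage_quadratic hd (a := 0) (b := 1 / d) (c := 0) fun s => by ring] at h₁
  rw [← hdiff, map_sub, ← alpha_eq_psiAverage, ← alpha_eq_psiAverage] at h₀ h₁
  exact ⟨h₀, h₁.trans_eq (by field_simp; ring)⟩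

lemma le_exp_mul_alpha_one_sub_alpha_two {d : ℕ} (hd : 2 ≤ d) (ν : ℝ) :
    (d + 1) / (6 * d) ≤ Real.exp (1 / (2 * ν ^ 2)) * (alpha d ν 1 - alpha d ν 2) := by
  have hd₀ : d ≠ 0 := by omega
  have hd₂ : (2 : ℝ) ≤ d := by exact_mod_cast hd
  have hd₁ : (d : ℝ) - 1 ≠ 0 := by linarith
  set f : ℕ → ℝ := fun s => s * (d - s) / (d * (d - 1))
  have hdiff : binomRatio d 1 - binomRatio d 2 = f := by
    funext s
    simp only [f, Pi.sub_apply, binomRatio_one, binomRatio_two]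
    field_simp
    ring
  have hf : ∀ s ∈ Icc 1 d, 0 ≤ f s := fun s hs => by
    have hsd : (s : ℝ) ≤ d := by exact_mod_cast (mem_Icc.mp hs).2
    exact div_nonneg (mul_nonneg (by positivity) (by linarith))
      (mul_nonneg (by positivity) (by linarith))
  calc (d + 1) / (6 * d) = gridAverage d f := by
        rw [gridAverage_quadratic hd₀ (a := 0) (b := 1 / (d - 1)) (c := -1 / (d * (d - 1)))
          fun s => by simp only [f]; field_simp; ring]
        field_simp
        ring
    _ ≤ Real.exp (1 / (2 * ν ^ 2)) * psiAverage d ν f := gridAverage_le_exp_mul_psiAverage ν hf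
    _ = Real.exp (1 / (2 * ν ^ 2)) * (alpha d ν 1 - alpha d ν 2) := by
      rw [← hdiff, map_sub, alpha_eq_psiAverage, alpha_eq_psiAverage]

lemma alpha_two_lt_alpha_one {d : ℕ} (hd : 2 ≤ d) (ν : ℝ) : alpha d ν 2 < alpha d ν 1 := by
  have h := (show (0 : ℝ) < (d + 1) / (6 * d) by positivity).trans_le
    (le_exp_mul_alpha_one_sub_alpha_two hd ν)
  exact sub_pos.mp (pos_of_mul_pos_right h (Real.exp_pos _).le)

lemma abs_sq_sub_mul_le {a₀ a₁ a₂ : ℝ} (h₂ : 0 ≤ a₂) (h₂₁ : a₂ ≤ a₁) (h₁₀ : a₁ ≤ a₀) :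
    |a₁ ^ 2 - a₀ * a₂| ≤ a₁ * max a₁ (a₀ - a₁) := by
  have h₁ : 0 ≤ a₁ := h₂.trans h₂₁
  rw [abs_le]
  constructor
  · nlinarith [le_max_right a₁ (a₀ - a₁), mul_le_mul_of_nonneg_left h₂₁ (h₁.trans h₁₀)]
  · nlinarith [le_max_left a₁ (a₀ - a₁), mul_nonneg (h₁.trans h₁₀) h₂]

lemma abs_sigma0_le {d : ℕ} (hd : 2 ≤ d) (ν : ℝ) : |sigma0 d ν| ≤ d / 3 := by
  have hd₀ : d ≠ 0 := by omega
  have hd₁ : (d : ℝ) - 1 ≠ 0 := by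
    have : (2 : ℝ) ≤ d := by exact_mod_cast hd
    linarith
  set f : ℕ → ℝ := fun s => (d - s) ^ 2 / d
  have hcomb : ((d : ℝ) - 1) • binomRatio d 2 + binomRatio d 1 = f := by
    funext s
    simp only [f, Pi.add_apply, Pi.smul_apply, smul_eq_mul, binomRatio_one, binomRatio_two]
    field_simp
    ring
  have hσ : sigma0 d ν = psiAverage d ν f := by
    rw [sigma0, alpha_eq_psiAverage, alpha_eq_psiAverage, ← hcomb, map_add, map_smul, smul_eq_mul]
  obtain ⟨h₀, h₁⟩ := psiAverage_mem_Icc (d := d) ν (f := f) fun _ _ => by positivity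
  rw [← hσ, gridAverage_quadratic hd₀ (a := d) (b := -2) (c := 1 / d)
    fun s => by simp only [f]; field_simp; ring] at h₁
  rw [abs_of_nonneg (hσ ▸ h₀)]
  refine h₁.trans ?_
  have : (2 : ℝ) ≤ d := by exact_mod_cast hd
  field_simp
  nlinarith

lemma abs_sigma1_le {d : ℕ} (hd : d ≠ 0) (ν : ℝ) : |sigma1 d ν| ≤ 1 := by
  rw [sigma1, abs_neg, abs_of_nonneg (alpha_mem_Icc d ν 1).1]
  refine (alpha_one_le hd ν).trans ?_
  rw [div_le_one (by positivity)]
  linarith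

lemma abs_sigma3_le {d : ℕ} (hd : 2 ≤ d) (ν : ℝ) :
    |sigma3 d ν| ≤ (3 / 2) * Real.exp (1 / (2 * ν ^ 2)) := by
  have hd₀ : d ≠ 0 := by omega
  have h₂₁ := alpha_two_lt_alpha_one hd ν
  obtain ⟨h₁₀, hα₀₁⟩ := alpha_zero_sub_alpha_one_mem_Icc hd₀ ν
  have hα₁ : alpha d ν 1 ≤ 1 / 2 := (alpha_one_le hd₀ ν).trans (by
    rw [div_le_div_iff₀ (by positivity) (by norm_num)]; linarith)
  have hmax : max (alpha d ν 1) (alpha d ν 0 - alpha d ν 1) ≤ (d + 1) / (2 * d) :=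
    max_le ((alpha_one_le hd₀ ν).trans (by gcongr; linarith)) hα₀₁
  have hnum := (abs_sq_sub_mul_le (alpha_mem_Icc d ν 2).1 h₂₁.le (sub_nonneg.mp h₁₀)).trans
    (mul_le_mul hα₁ hmax (le_max_of_le_left (alpha_mem_Icc d ν 1).1) (by norm_num))
  rw [sigma3, abs_div, abs_of_pos (sub_pos.mpr h₂₁), div_le_iff₀ (sub_pos.mpr h₂₁)]
  calc |alpha d ν 1 ^ 2 - alpha d ν 0 * alpha d ν 2| ≤ 1 / 2 * ((d + 1) / (2 * d)) := hnum
    _ = 3 / 2 * ((d + 1) / (6 * d)) := by ring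
    _ ≤ 3 / 2 * (Real.exp (1 / (2 * ν ^ 2)) * (alpha d ν 1 - alpha d ν 2)) :=
      mul_le_mul_of_nonneg_left (le_exp_mul_alpha_one_sub_alpha_two hd ν) (by norm_num)
    _ = _ := by ring

lemma sigma2_eq_alpha_zero_sub (d : ℕ) (ν : ℝ) (h : alpha d ν 1 ≠ alpha d ν 2) :
    sigma2 d ν = alpha d ν 0 - (d - 1) * sigma3 d ν := by
  have h' : alpha d ν 1 - alpha d ν 2 ≠ 0 := sub_ne_zero.mpr h
  rw [sigma2, sigma3]
  field_simp
  ring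

lemma abs_sigma2_le {d : ℕ} (hd : 2 ≤ d) (ν : ℝ) :
    |sigma2 d ν| ≤ (3 * (d : ℝ) / 2) * Real.exp (1 / (2 * ν ^ 2)) := by
  have hd₁ : (1 : ℝ) ≤ d - 1 := by
    have : (2 : ℝ) ≤ d := by exact_mod_cast hd
    linarith
  have hE : 1 ≤ Real.exp (1 / (2 * ν ^ 2)) := Real.one_le_exp (by positivity)
  rw [sigma2_eq_alpha_zero_sub d ν (alpha_two_lt_alpha_one hd ν).ne']
  calc _ ≤ |alpha d ν 0| + |(d - 1) * sigma3 d ν| := abs_sub _ _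
    _ ≤ 1 + (d - 1) * ((3 / 2) * Real.exp (1 / (2 * ν ^ 2))) := by
      rw [abs_of_nonneg (alpha_mem_Icc d ν 0).1, abs_mul, abs_of_pos (by linarith)]
      gcongr
      · exact alpha_zero_le_one (by omega) ν
      · exact abs_sigma3_le hd ν
    _ ≤ _ := by nlinarith

theorem sigma_coefficients_bounds_general (d : ℕ) (hd : 2 ≤ d) (ν : ℝ) :
    |sigma0 d ν| ≤ (d : ℝ) / 3
      ∧ |sigma1 d ν| ≤ 1
      ∧ |sigma2 d ν| ≤ (3 * (d : ℝ) / 2) * Real.exp (1 / (2 * ν ^ 2))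
      ∧ |sigma3 d ν| ≤ (3 / 2) * Real.exp (1 / (2 * ν ^ 2)) :=
  ⟨abs_sigma0_le hd ν, abs_sigma1_le (by omega) ν, abs_sigma2_le hd ν, abs_sigma3_le hd ν⟩

/-- for d ≥ 2 and ν ≥ 1.66, bounds on the σ coefficients. -/
theorem sigma_coefficients_bounds (d : ℕ) (hd : 2 ≤ d) (ν : ℝ) (hν : (1.66 : ℝ) ≤ ν) :
    |sigma0 d ν| ≤ (d : ℝ) / 3
      ∧ |sigma1 d ν| ≤ 1
      ∧ |sigma2 d ν| ≤ (3 * (d : ℝ) / 2) * Real.exp (1 / (2 * ν ^ 2))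
      ∧ |sigma3 d ν| ≤ (3 / 2) * Real.exp (1 / (2 * ν ^ 2)) :=
  sigma_coefficients_bounds_general d hd ν
end
end

section
/- Let d ≥ 3, let u_1,…,u_d be positive reals, and let S be the LIME random subset of {1,…,d}. Fix 1 ≤ j, k ≤ d with j ≠ k. Then E[z_k (φ_S)_j] = ((d−2)/(3d)) · (u_j/√(Σ_{ℓ=1}^d u_ℓ²)) · E[(1 − H_S)^{−1/2} | j ∉ S and k ∉ S], where the conditional expectation given the event {j ∉ S, k ∉ S} is E[1{j∉S, k∉S} (1−H_S)^{−1/2}] / P(j ∉ S, k ∉ S). -/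
/-!
On the event `{j ∉ S, k ∉ S}` the identity `1 - H_S = ∑_{l ∉ S} u_l² / ‖u‖²` gives
`(φ_S)_j = (u_j / ‖u‖) (1 - H_S)^{-1/2}`, and `z_k (φ_S)_j` vanishes off that event; so the left
side is `(u_j / ‖u‖) E[1{j,k ∉ S} (1 - H_S)^{-1/2}]`, and it remains to see that
`P(j, k ∉ S) = (d - 2)/(3d)` is nonzero. For a fixed set `A` of size `m`,
`P(S ∩ A = ∅) = (1/d) ∑_s C(d-m, s)/C(d, s) = (1/d) ∑_s C(d-s, m)/C(d, m) = (d - m)/((m+1) d)`,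
by double counting pairs of disjoint sets of sizes `s` and `m`, then the hockey-stick identity.
-/

noncomputable section

/-- Expectation of `g S` where `S` is the LIME random subset of `{1,…,d}`:
first draw `s` uniformly in `{1,…,d}`, then `S` uniformly among subsets of cardinality `s`. -/
def limeExp (d : ℕ) (g : Finset (Fin d) → ℝ) : ℝ :=
  (1 / (d : ℝ)) * ∑ s ∈ Finset.Icc 1 d, ((d.choose s : ℝ))⁻¹ *
    ∑ S ∈ Finset.univ.filter (fun S : Finset (Fin d) => S.card = s), g S

/-- Normalized TF-IDF of the perturbed document obtained by deleting the words
indexed by `S`: `(φ_S)_j = 1{j ∉ S} · u_j / √(∑_{k ∉ S} u_k²)`, and `φ_S = 0`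
when all words are deleted. -/
def phiS {d : ℕ} (u : Fin d → ℝ) (S : Finset (Fin d)) : Fin d → ℝ :=
  if S = Finset.univ then 0 else
    fun j => (if j ∉ S then (1 : ℝ) else 0) * u j / Real.sqrt (∑ k ∈ Sᶜ, (u k) ^ 2)

/-- `H_S = ∑_{k∈S} ω_k` with `ω_k = u_k²/∑_ℓ u_ℓ²`. -/
def HS {d : ℕ} (u : Fin d → ℝ) (S : Finset (Fin d)) : ℝ :=
  ∑ k ∈ S, (u k) ^ 2 / (∑ l, (u l) ^ 2)

open Finset

namespace Nat

theorem choose_mul_choose_sub_comm (n s m : ℕ) :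
    n.choose s * (n - s).choose m = n.choose m * (n - m).choose s := by
  by_cases h : s + m ≤ n
  · have hs := choose_mul (n := n) (k := s + m) (Nat.le_add_right s m)
    have hm := choose_mul (n := n) (k := s + m) (Nat.le_add_left m s)
    rw [Nat.add_sub_cancel_left] at hs
    rw [Nat.add_sub_cancel] at hm
    rw [← hs, ← hm, choose_symm_add]
  · rcases lt_or_ge n s with hs | hs
    · rw [choose_eq_zero_of_lt hs, choose_eq_zero_of_lt (show n - m < s by omega),
        zero_mul, mul_zero]
    rcases lt_or_ge n m with hm | hm
    · rw [choose_eq_zero_of_lt hm, choose_eq_zero_of_lt (show n - s < m by omega),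
        zero_mul, mul_zero]
    rw [choose_eq_zero_of_lt (show n - s < m by omega),
      choose_eq_zero_of_lt (show n - m < s by omega), mul_zero, mul_zero]

theorem sum_range_choose_eq_choose_succ (n m : ℕ) :
    ∑ t ∈ range n, t.choose m = n.choose (m + 1) := by
  induction n with
  | zero => simp
  | succ n ih => rw [sum_range_succ, ih, choose_succ_succ', add_comm]

theorem sum_Icc_one_choose_sub (n m : ℕ) :
    ∑ s ∈ Icc 1 n, (n - s).choose m = n.choose (m + 1) := by
  rw [← sum_range_choose_eq_choose_succ]
  exact sum_nbij' (n - ·) (n - ·)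
    (fun s hs => by simp only [mem_Icc] at hs; simp only [mem_range]; omega)
    (fun t ht => by simp only [mem_range] at ht; simp only [mem_Icc]; omega)
    (fun s hs => by simp only [mem_Icc] at hs; omega)
    (fun t ht => by simp only [mem_range] at ht; omega)
    (fun _ _ => rfl)

end Nat

theorem Finset.card_filter_card_eq_and_disjoint {α : Type*} [Fintype α] [DecidableEq α]
    (A : Finset α) (s : ℕ) :
    #{S : Finset α | #S = s ∧ Disjoint S A} = (Fintype.card α - #A).choose s := by
  have : ({S : Finset α | #S = s ∧ Disjoint S A} : Finset _) = powersetCard s Aᶜ := by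
    ext S
    simp [mem_powersetCard, subset_compl_iff_disjoint_right, and_comm]
  rw [this, card_powersetCard, card_compl]

theorem limeExp_const_mul (d : ℕ) (c : ℝ) (g : Finset (Fin d) → ℝ) :
    limeExp d (fun S => c * g S) = c * limeExp d g := by
  simp only [limeExp, mul_left_comm _ c, ← mul_sum]

theorem limeExp_indicator_disjoint {d : ℕ} (A : Finset (Fin d)) :
    limeExp d (fun S => if Disjoint S A then 1 else 0) = ((d : ℝ) - #A) / ((#A + 1) * d) := by
  have hm : #A ≤ d := by simpa using card_le_univ A
  have hdm : (d.choose #A : ℝ) ≠ 0 := by exact_mod_cast (Nat.choose_pos hm).ne'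
  have hterm : ∀ s ∈ Icc 1 d, (d.choose s : ℝ)⁻¹ *
      ∑ S ∈ univ.filter (fun S : Finset (Fin d) => #S = s), (if Disjoint S A then 1 else 0)
        = (d - s).choose #A / d.choose #A := by
    intro s hs
    have hds : (d.choose s : ℝ) ≠ 0 := by
      exact_mod_cast (Nat.choose_pos (mem_Icc.1 hs).2).ne'
    rw [sum_boole, filter_filter, card_filter_card_eq_and_disjoint, Fintype.card_fin,
      inv_mul_eq_div, div_eq_div_iff hds hdm, mul_comm]
    exact_mod_cast (Nat.choose_mul_choose_sub_comm d s #A).symm.trans (mul_comm _ _)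
  have hsucc : (d.choose (#A + 1) : ℝ) * (#A + 1) = d.choose #A * (d - #A) := by
    exact_mod_cast Nat.choose_succ_right_eq d #A
  have hsum : ∑ s ∈ Icc 1 d, ((d - s).choose #A : ℝ) = d.choose (#A + 1) := by
    exact_mod_cast Nat.sum_Icc_one_choose_sub d #A
  rw [limeExp, sum_congr rfl hterm, ← sum_div, hsum]
  rcases eq_or_ne (d : ℝ) 0 with hd | hd
  · simp [hd]
  field_simp
  linear_combination hsucc

section TFIDF

variable {d : ℕ} (u : Fin d → ℝ)

theorem one_sub_HS (hT : 0 < ∑ l, u l ^ 2) (S : Finset (Fin d)) :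
    1 - HS u S = (∑ l ∈ Sᶜ, u l ^ 2) / ∑ l, u l ^ 2 := by
  rw [HS, ← sum_div, eq_div_iff hT.ne', sub_mul, div_mul_cancel₀ _ hT.ne', one_mul,
    ← sum_add_sum_compl S]
  ring

theorem phiS_apply_of_mem {S : Finset (Fin d)} {j : Fin d} (hj : j ∈ S) : phiS u S j = 0 := by
  unfold phiS
  split_ifs <;> simp [hj]

theorem phiS_apply_of_notMem {S : Finset (Fin d)} {j : Fin d} (hj : j ∉ S) :
    phiS u S j = u j / √(∑ l ∈ Sᶜ, u l ^ 2) := by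
  have hS : S ≠ univ := fun h => hj (h ▸ mem_univ j)
  simp [phiS, hS, hj]

theorem phiS_apply_eq_mul_inv_sqrt_one_sub_HS (hT : 0 < ∑ l, u l ^ 2) {S : Finset (Fin d)}
    {j : Fin d} (hj : j ∉ S) :
    phiS u S j = u j / √(∑ l, u l ^ 2) * (√(1 - HS u S))⁻¹ := by
  rw [phiS_apply_of_notMem u hj, one_sub_HS u hT, Real.sqrt_div' _ hT.le, inv_div,
    div_mul_div_cancel₀ (Real.sqrt_ne_zero'.2 hT)]

theorem indicator_mul_phiS_apply (hT : 0 < ∑ l, u l ^ 2) (j k : Fin d) (S : Finset (Fin d)) :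
    (if k ∉ S then (1 : ℝ) else 0) * phiS u S j
      = u j / √(∑ l, u l ^ 2) * (if j ∉ S ∧ k ∉ S then (√(1 - HS u S))⁻¹ else 0) := by
  by_cases hk : k ∈ S
  · simp [hk]
  by_cases hj : j ∈ S
  · simp [hk, hj, phiS_apply_of_mem]
  simp [hk, hj, phiS_apply_eq_mul_inv_sqrt_one_sub_HS u hT hj]

end TFIDF

/-- for j ≠ k,
E[z_k (φ_S)_j] = ((d−2)/(3d)) · (u_j/‖u‖) · E[(1−H_S)^{−1/2} | j ∉ S, k ∉ S]. -/
theorem expected_tfidf_two_indices (d : ℕ) (hd : 3 ≤ d) (u : Fin d → ℝ)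
    (hu : ∀ k, 0 < u k) (j k : Fin d) (hjk : j ≠ k) :
    limeExp d (fun S => (if k ∉ S then (1 : ℝ) else 0) * phiS u S j)
      = (((d : ℝ) - 2) / (3 * (d : ℝ))) * (u j / Real.sqrt (∑ l, (u l) ^ 2)) *
        (limeExp d (fun S => if j ∉ S ∧ k ∉ S then (Real.sqrt (1 - HS u S))⁻¹ else 0) /
          limeExp d (fun S => if j ∉ S ∧ k ∉ S then (1 : ℝ) else 0)) := by
  have hT : 0 < ∑ l, u l ^ 2 := sum_pos (fun l _ => pow_pos (hu l) 2) ⟨j, mem_univ j⟩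
  have hprob : limeExp d (fun S => if j ∉ S ∧ k ∉ S then (1 : ℝ) else 0)
      = ((d : ℝ) - 2) / (3 * d) := by
    have h := limeExp_indicator_disjoint ({j, k} : Finset (Fin d))
    simp only [disjoint_insert_right, disjoint_singleton_right, card_pair hjk] at h
    rw [h]
    norm_num
  have hprob_ne : ((d : ℝ) - 2) / (3 * d) ≠ 0 := by
    have : (3 : ℝ) ≤ d := by exact_mod_cast hd
    exact div_ne_zero (by linarith) (by linarith)
  simp_rw [indicator_mul_phiS_apply u hT j k, limeExp_const_mul, hprob]
  rw [mul_comm _ (u j / _), mul_assoc, mul_div_cancel₀ _ hprob_ne]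
end
end
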